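/- arXiv:2507.18573 — 2 statements merged into one kernel-verified Lean document; each statement's English description precedes it below -/
import Mathlib

section
/- Let U ⊆ ℝⁿ be an open set that is star-shaped about the origin and invariant under a linear action h of the multiplicative group ℝ^× of nonzero reals (h_z denoting the action of z). Then every closed differential p-form α on U satisfying h_z^*α = z·α for all z ∈ ℝ^× is exact, and admits a primitive β (i.e. dβ = α) which is itself 1-homogeneous: h_z^*β = z·β for all z ∈ ℝ^×. -/
/-!
The primitive is the cone operator of the radial contraction `t ↦ t • x`, which stays in `U` by
star-shapedness: `β_x(w) = ∫₀¹ tᵖ α_{tx}(x, w) dt`. Differentiating under the integral sign, the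
alternating sum defining `(dβ)_x(v)` has integrand `t^{p+1} Σᵢ ±(∂_{vᵢ}α)_{tx}(x, …) +
(p+1) tᵖ α_{tx}(v)`; closedness of `α` turns the first sum into `∂_x α_{tx}(v)`, so the integrand
is `d/dt (t^{p+1} α_{tx}(v))` and integrates to `α_x(v)`. Each `h_z` is linear, hence commutes
with the contraction, so `h_z^* β` is the cone operator applied to `h_z^* α = z • α`, i.e. `z • β`.
-/

abbrev En (n : ℕ) := EuclideanSpace ℝ (Fin n)

/-- Exterior derivative of a `k`-form (evaluated on constant vector fields). -/
noncomputable def extD {E : Type*} [NormedAddCommGroup E] [NormedSpace ℝ E] {k : ℕ}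
    (α : E → (Fin k → E) → ℝ) (x : E) (v : Fin (k + 1) → E) : ℝ :=
  ∑ i : Fin (k + 1), (-1 : ℝ) ^ (i : ℕ) *
    fderiv ℝ (fun y => α y (fun j => v (i.succAbove j))) x (v i)

open Set Filter Topology MeasureTheory

section ParametricIntegral

variable {E F G : Type*} [NormedAddCommGroup E] [NormedAddCommGroup F]
  [NormedAddCommGroup G] {O : Set (E × ℝ)} {a b : ℝ} {x : E}

lemma exists_bound_eventually_forall_uIcc (hO : IsOpen O) {g : E × ℝ → G}
    (hg : ContinuousOn g O) (hx : ∀ t ∈ uIcc a b, (x, t) ∈ O) :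
    ∃ C, ∀ᶠ y in 𝓝 x, ∀ t ∈ uIcc a b, (y, t) ∈ O ∧ ‖g (y, t)‖ ≤ C := by
  obtain ⟨C, hC⟩ := isCompact_uIcc.exists_bound_of_continuousOn
    (hg.comp (Continuous.continuousOn (by fun_prop)) hx)
  refine ⟨C + 1, isCompact_uIcc.eventually_forall_of_forall_eventually fun t ht => ?_⟩
  have hxt : O ∈ 𝓝 (x, t) := hO.mem_nhds (hx t ht)
  filter_upwards [hxt, ((hg.continuousAt hxt).norm.eventually
    (eventually_lt_nhds (lt_add_one _)))] with q hqO hq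
  exact ⟨hqO, hq.le.trans (by gcongr; exact hC t ht)⟩

lemma ContinuousOn.intervalIntegrable_comp_prodMk {f : E × ℝ → F} (hf : ContinuousOn f O)
    {y : E} (hy : ∀ t ∈ uIcc a b, (y, t) ∈ O) :
    IntervalIntegrable (fun t => f (y, t)) volume a b :=
  (hf.comp (Continuous.continuousOn (by fun_prop)) hy).intervalIntegrable

variable [NormedSpace ℝ F]

theorem continuousAt_intervalIntegral_of_continuousOn (hO : IsOpen O) {f : E × ℝ → F}
    (hf : ContinuousOn f O) (hx : ∀ t ∈ uIcc a b, (x, t) ∈ O) :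
    ContinuousAt (fun y => ∫ t in a..b, f (y, t)) x := by
  obtain ⟨C, hC⟩ := exists_bound_eventually_forall_uIcc hO hf hx
  refine intervalIntegral.continuousAt_of_dominated_interval (bound := fun _ => C) ?_ ?_
    intervalIntegrable_const (ae_of_all _ fun t ht => ?_)
  · filter_upwards [hC] with y hy
    exact (hf.intervalIntegrable_comp_prodMk fun t ht => (hy t ht).1).def'.aestronglyMeasurable
  · filter_upwards [hC] with y hy
    exact ae_of_all _ fun t ht => (hy t (uIoc_subset_uIcc ht)).2
  · exact (hf.continuousAt (hO.mem_nhds (hx t (uIoc_subset_uIcc ht)))).comp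
      (f := fun y => (y, t)) (by fun_prop)

variable [NormedSpace ℝ E]

lemma DifferentiableAt.fderiv_comp_prodMk_const {f : E × ℝ → F} {q : E × ℝ}
    (hf : DifferentiableAt ℝ f q) :
    fderiv ℝ (fun y => f (y, q.2)) q.1 = (fderiv ℝ f q).comp (.inl ℝ E ℝ) :=
  (hf.hasFDerivAt.comp q.1 (hasFDerivAt_prodMk_left q.1 q.2)).fderiv

lemma ContDiffOn.continuousOn_fderiv_comp_inl (hO : IsOpen O) {f : E × ℝ → F}
    (hf : ContDiffOn ℝ 1 f O) :
    ContinuousOn (fun q => (fderiv ℝ f q).comp (.inl ℝ E ℝ)) O :=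
  ((ContinuousLinearMap.compL ℝ E (E × ℝ) F).flip (.inl ℝ E ℝ)).continuous.comp_continuousOn
    (hf.continuousOn_fderiv_of_isOpen hO le_rfl)

theorem hasFDerivAt_intervalIntegral_of_contDiffOn (hO : IsOpen O) {f : E × ℝ → F}
    (hf : ContDiffOn ℝ 1 f O) (hx : ∀ t ∈ uIcc a b, (x, t) ∈ O) :
    HasFDerivAt (fun y => ∫ t in a..b, f (y, t))
      (∫ t in a..b, (fderiv ℝ f (x, t)).comp (.inl ℝ E ℝ)) x := by
  have hdiff : ∀ q ∈ O, DifferentiableAt ℝ f q := fun q hq =>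
    (hf.differentiableOn one_ne_zero).differentiableAt (hO.mem_nhds hq)
  have hf' := hf.continuousOn_fderiv_comp_inl hO
  obtain ⟨C, hC⟩ := exists_bound_eventually_forall_uIcc hO hf' hx
  obtain ⟨s, hs, hsC⟩ := hC.exists_mem
  refine intervalIntegral.hasFDerivAt_integral_of_dominated_of_fderiv_le (bound := fun _ => C)
    hs ?_ (hf.continuousOn.intervalIntegrable_comp_prodMk hx)
    (hf'.intervalIntegrable_comp_prodMk hx).def'.aestronglyMeasurable
    (ae_of_all _ fun t ht y hy => (hsC y hy t (uIoc_subset_uIcc ht)).2)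
    intervalIntegrable_const (ae_of_all _ fun t ht y hy => ?_)
  · filter_upwards [hC] with y hy
    exact (hf.continuousOn.intervalIntegrable_comp_prodMk fun t ht =>
      (hy t ht).1).def'.aestronglyMeasurable
  · have hyt := (hsC y hy t (uIoc_subset_uIcc ht)).1
    exact (hdiff _ hyt).hasFDerivAt.comp y (hasFDerivAt_prodMk_left y t)

theorem fderiv_intervalIntegral_apply_of_contDiffOn (hO : IsOpen O) {f : E × ℝ → F}
    (hf : ContDiffOn ℝ 1 f O) (hx : ∀ t ∈ uIcc a b, (x, t) ∈ O) (u : E) :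
    fderiv ℝ (fun y => ∫ t in a..b, f (y, t)) x u = ∫ t in a..b, fderiv ℝ f (x, t) (u, 0) := by
  rw [(hasFDerivAt_intervalIntegral_of_contDiffOn hO hf hx).fderiv,
    ContinuousLinearMap.intervalIntegral_apply
      ((hf.continuousOn_fderiv_comp_inl hO).intervalIntegrable_comp_prodMk hx)]
  rfl

theorem contDiffOn_intervalIntegral_of_contDiffOn [FiniteDimensional ℝ E] (hO : IsOpen O)
    {n : ℕ∞} {f : E × ℝ → F} (hf : ContDiffOn ℝ n f O) {V : Set E} (hV : IsOpen V)
    (hVO : ∀ y ∈ V, ∀ t ∈ uIcc a b, (y, t) ∈ O) :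
    ContDiffOn ℝ n (fun y => ∫ t in a..b, f (y, t)) V := by
  induction n using ENat.nat_induction generalizing f with
  | zero =>
    exact contDiffOn_zero.2 fun y hy =>
      (continuousAt_intervalIntegral_of_continuousOn hO hf.continuousOn
        (hVO y hy)).continuousWithinAt
  | succ m ih =>
    have hf1 : ContDiffOn ℝ 1 f O := hf.of_le (by exact_mod_cast Nat.succ_pos m)
    -- Differentiating in a fixed direction `u` keeps the codomain `F` along the induction.
    rw [show ((m.succ : ℕ∞) : WithTop ℕ∞) = (m : WithTop ℕ∞) + 1 by norm_cast,
      contDiffOn_succ_iff_fderiv_apply hV.uniqueDiffOn]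
    refine ⟨fun y hy => (hasFDerivAt_intervalIntegral_of_contDiffOn hO hf1
      (hVO y hy)).differentiableAt.differentiableWithinAt, by simp, fun u => ?_⟩
    have hfu : ContDiffOn ℝ m (fun q => fderiv ℝ f q (u, 0)) O :=
      (hf.fderiv_of_isOpen hO (by norm_cast)).clm_apply contDiffOn_const
    refine (ih hfu).congr fun y hy => ?_
    rw [fderivWithin_of_isOpen hV hy, fderiv_intervalIntegral_apply_of_contDiffOn hO hf1 (hVO y hy)]
  | top ih =>
    exact contDiffOn_infty.2 fun m => ih m (hf.of_le (by exact_mod_cast le_top))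

end ParametricIntegral

lemma AlternatingMap.sum_neg_one_pow_mul_map_cons_removeNth {E : Type*} [AddCommGroup E]
    [Module ℝ E] {p : ℕ} (f : E [⋀^Fin (p + 1)]→ₗ[ℝ] ℝ) (v : Fin (p + 1) → E) :
    ∑ i : Fin (p + 1), (-1 : ℝ) ^ (i : ℕ) * f (Fin.cons (v i) (i.removeNth v)) = (p + 1) * f v := by
  have := congr($(alternatizeUncurryFin_curryLeft f) v)
  rw [alternatizeUncurryFin_apply] at this
  simpa [Matrix.vecCons, nsmul_eq_mul] using this

lemma fderiv_apply_eq_sum_of_extD_eq_zero {E : Type*} [NormedAddCommGroup E] [NormedSpace ℝ E]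
    {p : ℕ} {α : E → (Fin (p + 1) → E) → ℝ} {z x : E} {v : Fin (p + 1) → E}
    (h : extD α z (Fin.cons x v) = 0) :
    fderiv ℝ (fun y => α y v) z x = ∑ i : Fin (p + 1), (-1) ^ (i : ℕ) *
      fderiv ℝ (fun y => α y (Fin.cons x (i.removeNth v))) z (v i) := by
  have hcons : ∀ i : Fin (p + 1), (fun j => (Fin.cons x v : Fin (p + 2) → E) (i.succ.succAbove j))
      = Fin.cons x (i.removeNth v) := fun i => by
    ext j
    cases j using Fin.cases <;> simp [Fin.removeNth, Fin.succ_succAbove_succ]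
  rw [extD, Fin.sum_univ_succ] at h
  simp only [Fin.val_zero, pow_zero, one_mul, Fin.val_succ, Fin.succAbove_zero, Fin.cons_zero,
    Fin.cons_succ, hcons, pow_succ, mul_neg_one, neg_mul, Finset.sum_neg_distrib] at h
  linarith

section RadialPrimitive

variable {E : Type*} [NormedAddCommGroup E] [NormedSpace ℝ E] {p : ℕ}
  {α : E → E [⋀^Fin (p + 1)]→ₗ[ℝ] ℝ} {U : Set E}

lemma StarConvex.smul_mem_of_mem_uIcc (hUstar : StarConvex ℝ 0 U) {x : E} (hx : x ∈ U) {t : ℝ}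
    (ht : t ∈ uIcc 0 1) : t • x ∈ U := by
  rw [uIcc_of_le zero_le_one] at ht
  exact hUstar.smul_mem hx ht.1 ht.2

def radialIntegrand (α : E → E [⋀^Fin (p + 1)]→ₗ[ℝ] ℝ) (w : Fin p → E) (q : E × ℝ) : ℝ :=
  q.2 ^ p * α (q.2 • q.1) (Fin.cons q.1 w)

lemma radialIntegrand_update_add (w : Fin p → E) (i : Fin p) (a b : E) (q : E × ℝ) :
    radialIntegrand α (Function.update w i (a + b)) q =
      radialIntegrand α (Function.update w i a) q +
        radialIntegrand α (Function.update w i b) q := by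
  simp only [radialIntegrand, Fin.cons_update, AlternatingMap.map_update_add, mul_add]

lemma radialIntegrand_update_smul (w : Fin p → E) (i : Fin p) (c : ℝ) (a : E) (q : E × ℝ) :
    radialIntegrand α (Function.update w i (c • a)) q =
      c * radialIntegrand α (Function.update w i a) q := by
  simp only [radialIntegrand, Fin.cons_update, AlternatingMap.map_update_smul, smul_eq_mul]
  ring

lemma radialIntegrand_eq_zero_of_eq (w : Fin p → E) {i j : Fin p} (hij : w i = w j) (hne : i ≠ j)
    (q : E × ℝ) : radialIntegrand α w q = 0 := by
  rw [radialIntegrand, AlternatingMap.map_eq_zero_of_eq _ _ (i := i.succ) (j := j.succ)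
    (by simpa using hij) (by simpa using hne), mul_zero]

-- Without the guard the integral, junk `0` on non-integrable integrands, need not be additive
-- in `w`; on a star-shaped set where `α` is continuous it holds (`radialPrimitive_apply`).
open Classical in
noncomputable def radialPrimitive (α : E → E [⋀^Fin (p + 1)]→ₗ[ℝ] ℝ) (x : E) :
    E [⋀^Fin p]→ₗ[ℝ] ℝ :=
  if h : ∀ w, IntervalIntegrable (fun t => radialIntegrand α w (x, t)) volume 0 1 then
    { toFun w := ∫ t in 0..1, radialIntegrand α w (x, t)
      map_update_add' w i a b := by
        rename_i inst
        obtain rfl : inst = instDecidableEqFin p := Subsingleton.elim _ _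
        simp only [radialIntegrand_update_add]
        exact intervalIntegral.integral_add (h _) (h _)
      map_update_smul' w i c a := by
        rename_i inst
        obtain rfl : inst = instDecidableEqFin p := Subsingleton.elim _ _
        simp only [radialIntegrand_update_smul, intervalIntegral.integral_const_mul, smul_eq_mul]
      map_eq_zero_of_eq' w i j hij hne := by
        simp only [radialIntegrand_eq_zero_of_eq w hij hne, intervalIntegral.integral_zero] }
  else 0

variable [FiniteDimensional ℝ E]

noncomputable def AlternatingMap.evalConsCLM
    (f : E [⋀^Fin (p + 1)]→ₗ[ℝ] ℝ) (w : Fin p → E) : E →L[ℝ] ℝ :=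
  LinearMap.toContinuousLinearMap (f.toMultilinearMap.toLinearMap (Fin.cons 0 w) 0)

@[simp]
lemma AlternatingMap.evalConsCLM_apply (f : E [⋀^Fin (p + 1)]→ₗ[ℝ] ℝ)
    (w : Fin p → E) (u : E) : f.evalConsCLM w u = f (Fin.cons u w) := by
  simp [AlternatingMap.evalConsCLM, Fin.update_cons_zero]

lemma contDiffOn_evalConsCLM {n : ℕ∞} (hα : ∀ v, ContDiffOn ℝ n (fun y => α y v) U)
    (w : Fin p → E) : ContDiffOn ℝ n (fun y => (α y).evalConsCLM w) U :=
  contDiffOn_clm_apply.2 fun u => by simpa using hα (Fin.cons u w)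

lemma contDiffOn_radialIntegrand {n : ℕ∞} (hα : ∀ v, ContDiffOn ℝ n (fun y => α y v) U)
    (w : Fin p → E) :
    ContDiffOn ℝ n (radialIntegrand α w) ((fun q : E × ℝ => q.2 • q.1) ⁻¹' U) := by
  refine ((contDiff_snd.pow p).contDiffOn.mul (((contDiffOn_evalConsCLM hα w).comp
    (contDiff_snd.smul contDiff_fst).contDiffOn fun q hq => hq).clm_apply contDiffOn_fst)).congr
    fun q _ => ?_
  simp [radialIntegrand]

lemma intervalIntegrable_radialIntegrand (hUstar : StarConvex ℝ 0 U)
    (hα : ∀ v, ContinuousOn (fun y => α y v) U) {x : E} (hx : x ∈ U) (w : Fin p → E) :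
    IntervalIntegrable (fun t => radialIntegrand α w (x, t)) volume 0 1 :=
  (contDiffOn_radialIntegrand (n := 0) (fun v => contDiffOn_zero.2 (hα v)) w).continuousOn
    |>.intervalIntegrable_comp_prodMk fun _ ht => hUstar.smul_mem_of_mem_uIcc hx ht

lemma radialPrimitive_apply (hUstar : StarConvex ℝ 0 U)
    (hα : ∀ v, ContinuousOn (fun y => α y v) U) {x : E} (hx : x ∈ U) (w : Fin p → E) :
    radialPrimitive α x w = ∫ t in 0..1, radialIntegrand α w (x, t) := by
  rw [radialPrimitive, dif_pos (intervalIntegrable_radialIntegrand hUstar hα hx)]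
  rfl

theorem contDiffOn_radialPrimitive (hUopen : IsOpen U) (hUstar : StarConvex ℝ 0 U) {n : ℕ∞}
    (hα : ∀ v, ContDiffOn ℝ n (fun y => α y v) U) (w : Fin p → E) :
    ContDiffOn ℝ n (fun y => radialPrimitive α y w) U :=
  (contDiffOn_intervalIntegral_of_contDiffOn (hUopen.preimage (by fun_prop))
    (contDiffOn_radialIntegrand hα w) hUopen fun _ hy _ ht =>
      hUstar.smul_mem_of_mem_uIcc hy ht).congr fun _ hy =>
    radialPrimitive_apply hUstar (fun v => (hα v).continuousOn) hy w

lemma fderiv_radialIntegrand_apply (hUopen : IsOpen U)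
    (hα : ∀ v, ContDiffOn ℝ 1 (fun y => α y v) U) {x : E} {t : ℝ} (hx : t • x ∈ U)
    (w : Fin p → E) (u : E) :
    fderiv ℝ (radialIntegrand α w) (x, t) (u, 0) =
      t ^ (p + 1) * fderiv ℝ (fun y => α y (Fin.cons x w)) (t • x) u +
        t ^ p * α (t • x) (Fin.cons u w) := by
  set L := fun y => (α y).evalConsCLM w
  have hL : DifferentiableAt ℝ L (t • x) :=
    ((contDiffOn_evalConsCLM hα w).differentiableOn one_ne_zero).differentiableAt
      (hUopen.mem_nhds hx)
  have hdiff : DifferentiableAt ℝ (radialIntegrand α w) (x, t) :=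
    ((contDiffOn_radialIntegrand hα w).differentiableOn one_ne_zero).differentiableAt
      ((hUopen.preimage (by fun_prop)).mem_nhds hx)
  have hc : HasFDerivAt (fun y : E => L (t • y))
      ((fderiv ℝ L (t • x)).comp (t • ContinuousLinearMap.id ℝ E)) x :=
    hL.hasFDerivAt.comp x ((hasFDerivAt_id x).const_smul t)
  have hpartial : (fun y => radialIntegrand α w (y, t)) = fun y => t ^ p * L (t • y) y := by
    ext y; simp [radialIntegrand, L]
  have hDL : fderiv ℝ (fun y => α y (Fin.cons x w)) (t • x) u = fderiv ℝ L (t • x) u x := by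
    have : (fun y => α y (Fin.cons x w)) = fun y => L y x := by ext y; simp [L]
    rw [this, fderiv_clm_apply hL (differentiableAt_const x)]
    simp
  have hF : HasFDerivAt (fun y => t ^ p * L (t • y) y) _ x :=
    (hc.clm_apply (hasFDerivAt_id x)).const_mul (t ^ p)
  show ((fderiv ℝ (radialIntegrand α w) (x, t)).comp (.inl ℝ E ℝ)) u = _
  rw [← hdiff.fderiv_comp_prodMk_const]
  dsimp only
  rw [hpartial, hF.fderiv, hDL]
  simp [L]
  ring

lemma hasDerivAt_pow_succ_mul_apply_smul (hUopen : IsOpen U)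
    (hα : ∀ v, ContDiffOn ℝ 1 (fun y => α y v) U) {x : E} {t : ℝ} (hx : t • x ∈ U)
    {v : Fin (p + 1) → E} (hclosed : extD (fun y w => α y w) (t • x) (Fin.cons x v) = 0) :
    HasDerivAt (fun s : ℝ => s ^ (p + 1) * α (s • x) v)
      (∑ i : Fin (p + 1), (-1) ^ (i : ℕ) *
        fderiv ℝ (radialIntegrand α (i.removeNth v)) (x, t) (v i, 0)) t := by
  have hdiff : DifferentiableAt ℝ (fun y => α y v) (t • x) :=
    ((hα v).differentiableOn one_ne_zero).differentiableAt (hUopen.mem_nhds hx)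
  have hray : HasDerivAt (fun s : ℝ => α (s • x) v) (fderiv ℝ (fun y => α y v) (t • x) x) t := by
    have := hdiff.hasFDerivAt.comp_hasDerivAt t ((hasDerivAt_id t).smul_const x)
    rwa [one_smul] at this
  refine ((hasDerivAt_pow (p + 1) t).mul hray).congr_deriv (Eq.symm ?_)
  calc _ = t ^ (p + 1) * ∑ i : Fin (p + 1), (-1) ^ (i : ℕ) *
          fderiv ℝ (fun y => α y (Fin.cons x (i.removeNth v))) (t • x) (v i) +
        t ^ p * ∑ i : Fin (p + 1), (-1) ^ (i : ℕ) * α (t • x) (Fin.cons (v i) (i.removeNth v)) := by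
        simp only [fderiv_radialIntegrand_apply hUopen hα hx, Finset.mul_sum,
          ← Finset.sum_add_distrib]
        exact Finset.sum_congr rfl fun i _ => by ring
    _ = t ^ (p + 1) * fderiv ℝ (fun y => α y v) (t • x) x + t ^ p * ((p + 1) * α (t • x) v) := by
        rw [fderiv_apply_eq_sum_of_extD_eq_zero hclosed,
          AlternatingMap.sum_neg_one_pow_mul_map_cons_removeNth]
    _ = _ := by push_cast; ring

theorem extD_radialPrimitive (hUopen : IsOpen U) (hUstar : StarConvex ℝ 0 U)
    (hα : ∀ v, ContDiffOn ℝ 1 (fun y => α y v) U)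
    (hclosed : ∀ x ∈ U, ∀ v, extD (fun y w => α y w) x v = 0) {x : E} (hx : x ∈ U)
    (v : Fin (p + 1) → E) :
    extD (fun y w => radialPrimitive α y w) x v = α x v := by
  have hO : IsOpen ((fun q : E × ℝ => q.2 • q.1) ⁻¹' U) := hUopen.preimage (by fun_prop)
  have hxO : ∀ t ∈ uIcc (0 : ℝ) 1, t • x ∈ U := fun t ht => hUstar.smul_mem_of_mem_uIcc hx ht
  have hβ : ∀ w u, fderiv ℝ (fun y => radialPrimitive α y w) x u =
      ∫ t in 0..1, fderiv ℝ (radialIntegrand α w) (x, t) (u, 0) := fun w u => by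
    rw [← fderiv_intervalIntegral_apply_of_contDiffOn hO (contDiffOn_radialIntegrand hα w) hxO u]
    congr 1
    exact Filter.EventuallyEq.fderiv_eq (eventually_of_mem (hUopen.mem_nhds hx) fun y hy =>
      radialPrimitive_apply hUstar (fun v => (hα v).continuousOn) hy w)
  set g : Fin (p + 1) → ℝ → ℝ := fun i t =>
    (-1) ^ (i : ℕ) * fderiv ℝ (radialIntegrand α (i.removeNth v)) (x, t) (v i, 0)
  have hg : ∀ i, IntervalIntegrable (g i) volume 0 1 := fun i =>
    ((((contDiffOn_radialIntegrand hα _).continuousOn_fderiv_of_isOpen hO le_rfl).clm_apply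
      continuousOn_const).intervalIntegrable_comp_prodMk hxO).const_mul _
  calc extD (fun y w => radialPrimitive α y w) x v
      = ∑ i, ∫ t in 0..1, g i t := Finset.sum_congr rfl fun i _ => by
        rw [intervalIntegral.integral_const_mul, ← hβ]
        rfl
    _ = ∫ t in 0..1, ∑ i, g i t := (intervalIntegral.integral_finsetSum fun i _ => hg i).symm
    _ = 1 ^ (p + 1) * α ((1 : ℝ) • x) v - 0 ^ (p + 1) * α ((0 : ℝ) • x) v :=
        intervalIntegral.integral_eq_sub_of_hasDerivAt
          (fun t ht => hasDerivAt_pow_succ_mul_apply_smul hUopen hα (hxO t ht)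
            (hclosed _ (hxO t ht) _))
          (by simpa only [Finset.sum_fn] using IntervalIntegrable.sum Finset.univ fun i _ => hg i)
    _ = α x v := by simp

theorem radialPrimitive_pullback (hUstar : StarConvex ℝ 0 U)
    (hα : ∀ v, ContinuousOn (fun y => α y v) U) (g : E →ₗ[ℝ] E) (c : ℝ)
    (hαg : ∀ y ∈ U, ∀ v : Fin (p + 1) → E, α (g y) (fun i => g (v i)) = c * α y v)
    {x : E} (hx : x ∈ U) (hgx : g x ∈ U) (w : Fin p → E) :
    radialPrimitive α (g x) (fun i => g (w i)) = c * radialPrimitive α x w := by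
  rw [radialPrimitive_apply hUstar hα hgx, radialPrimitive_apply hUstar hα hx,
    ← intervalIntegral.integral_const_mul]
  refine intervalIntegral.integral_congr fun t ht => ?_
  have hcons : (Fin.cons (g x) fun i => g (w i) : Fin (p + 1) → E) =
      fun i => g ((Fin.cons x w : Fin (p + 1) → E) i) :=
    (Fin.comp_cons g x w).symm
  simp only [radialIntegrand, hcons, ← map_smul, hαg _ (hUstar.smul_mem_of_mem_uIcc hx ht)]
  ring

end RadialPrimitive

theorem homogeneous_poincare_lemma_general {n p : ℕ}
    (U : Set (En n)) (hUopen : IsOpen U) (hUstar : StarConvex ℝ (0 : En n) U)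
    -- a linear action of ℝˣ on ℝⁿ leaving U invariant
    (h : ℝˣ → En n →L[ℝ] En n)
    (hUinv : ∀ z : ℝˣ, ∀ x ∈ U, h z x ∈ U)
    -- a smooth (p+1)-form on U
    (α : En n → AlternatingMap ℝ (En n) ℝ (Fin (p + 1)))
    (hα_smooth : ∀ v : Fin (p + 1) → En n, ContDiffOn ℝ (⊤ : ℕ∞) (fun y => α y v) U)
    -- closed on U
    (hα_closed : ∀ x ∈ U, ∀ v : Fin (p + 2) → En n, extD (fun y w => α y w) x v = 0)
    -- 1-homogeneous: h_z^* α = z • α on U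
    (hα_hom : ∀ z : ℝˣ, ∀ x ∈ U, ∀ v : Fin (p + 1) → En n,
      α (h z x) (fun i => h z (v i)) = (z : ℝ) * α x v) :
    -- there is a smooth primitive β on U which is itself 1-homogeneous
    ∃ β : En n → AlternatingMap ℝ (En n) ℝ (Fin p),
      (∀ v : Fin p → En n, ContDiffOn ℝ (⊤ : ℕ∞) (fun y => β y v) U) ∧
      (∀ x ∈ U, ∀ v : Fin (p + 1) → En n, extD (fun y w => β y w) x v = α x v) ∧
      (∀ z : ℝˣ, ∀ x ∈ U, ∀ v : Fin p → En n,
        β (h z x) (fun i => h z (v i)) = (z : ℝ) * β x v) := by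
  have hα_one : ∀ v, ContDiffOn ℝ 1 (fun y => α y v) U := fun v =>
    (hα_smooth v).of_le (by exact_mod_cast le_top)
  refine ⟨radialPrimitive α, contDiffOn_radialPrimitive hUopen hUstar hα_smooth,
    fun x hx v => extD_radialPrimitive hUopen hUstar hα_one hα_closed hx v,
    fun z x hx v => ?_⟩
  exact radialPrimitive_pullback hUstar (fun v => (hα_smooth v).continuousOn) (h z).toLinearMap z
    (hα_hom z) hx (hUinv z x hx) v

theorem homogeneous_poincare_lemma {n p : ℕ}
    (U : Set (En n)) (hUopen : IsOpen U) (hUstar : StarConvex ℝ (0 : En n) U)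
    -- a linear action of ℝˣ on ℝⁿ leaving U invariant
    (h : ℝˣ → En n →L[ℝ] En n)
    (h_one : h 1 = ContinuousLinearMap.id ℝ (En n))
    (h_mul : ∀ z w : ℝˣ, h (z * w) = (h z).comp (h w))
    (hUinv : ∀ z : ℝˣ, ∀ x ∈ U, h z x ∈ U)
    -- a smooth (p+1)-form on U
    (α : En n → AlternatingMap ℝ (En n) ℝ (Fin (p + 1)))
    (hα_smooth : ∀ v : Fin (p + 1) → En n, ContDiffOn ℝ (⊤ : ℕ∞) (fun y => α y v) U)
    -- closed on U
    (hα_closed : ∀ x ∈ U, ∀ v : Fin (p + 2) → En n, extD (fun y w => α y w) x v = 0)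
    -- 1-homogeneous: h_z^* α = z • α on U
    (hα_hom : ∀ z : ℝˣ, ∀ x ∈ U, ∀ v : Fin (p + 1) → En n,
      α (h z x) (fun i => h z (v i)) = (z : ℝ) * α x v) :
    -- there is a smooth primitive β on U which is itself 1-homogeneous
    ∃ β : En n → AlternatingMap ℝ (En n) ℝ (Fin p),
      (∀ v : Fin p → En n, ContDiffOn ℝ (⊤ : ℕ∞) (fun y => β y v) U) ∧
      (∀ x ∈ U, ∀ v : Fin (p + 1) → En n, extD (fun y w => β y w) x v = α x v) ∧
      (∀ z : ℝˣ, ∀ x ∈ U, ∀ v : Fin p → En n,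
        β (h z x) (fun i => h z (v i)) = (z : ℝ) * β x v) :=
  homogeneous_poincare_lemma_general U hUopen hUstar h hUinv α hα_smooth hα_closed hα_hom
end

section
/- Let (P_J, Π) be the Poissonization of a Jacobi manifold, with cotangent bundle T^*P_J carrying the phase-lifted ℝ^×-action T^*h, and let X be a Poisson spray on T^*P_J of the local form X = Σ_{ij} (1/t)Λ_{ij}(x)ξ_j ∂/∂x_i + E_j(x)ξ_j ∂/∂t − E_i(x)ξ_t ∂/∂x_i + f_{ij} ξ_i ξ_j ∂/∂ξ_j. If the coefficient functions satisfy f_{ij}(x, zt) = (1/z)f_{ij}(x,t) for i ≠ t and f_{tj}(x, zt) = f_{tj}(x,t) for all z ∈ ℝ^×, then X is 0-homogeneous, i.e. (T^*h_z)_*X = X, and consequently its flow φ^s_X commutes with the lifted action: φ^s_X ∘ T^*h_z = T^*h_z ∘ φ^s_X. -/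
/-! Homogeneity of the spray is a componentwise computation: rescaling `t` and `ξ` by `z` is
absorbed by the factor `1/t` in front of `Λ` and by the homogeneity of the coefficients `f`.
Since `phaseLift n z` is linear, homogeneity makes `r ↦ phaseLift n z (φ r m)` an integral curve
through `phaseLift n z m`; the spray is `C¹` on `t ≠ 0`, so uniqueness of solutions of a locally
Lipschitz ODE identifies this curve with `r ↦ φ r (phaseLift n z m)`. -/

/-- Points of T^*P_J in coordinates: (x, t, ξ_x, ξ_t). -/
abbrev CotPJ (n : ℕ) := (Fin n → ℝ) × ℝ × (Fin n → ℝ) × ℝ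

/-- The phase-lifted ℝˣ-action: (x, t, ξ_x, ξ_t) ↦ (x, z·t, z·ξ_x, ξ_t). -/
def phaseLift (n : ℕ) (z : ℝˣ) (m : CotPJ n) : CotPJ n :=
  (m.1, (z : ℝ) * m.2.1, (z : ℝ) • m.2.2.1, m.2.2.2)

/-- The Poisson spray
X = Σ (1/t)Λ_{ij}(x)ξ_j ∂/∂x_i + E_j(x)ξ_j ∂/∂t − E_i(x)ξ_t ∂/∂x_i + f_{ij}ξ_iξ_j ∂/∂ξ_j
(the index i of the optional coefficients f_{ij} runs over the spatial indices and t). -/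
noncomputable def spray {n : ℕ}
    (Λ : (Fin n → ℝ) → Fin n → Fin n → ℝ) (Ev : (Fin n → ℝ) → Fin n → ℝ)
    (f : (Fin n → ℝ) → ℝ → Fin n → Fin n → ℝ)   -- f_{ij}, i,j spatial
    (fT : (Fin n → ℝ) → ℝ → Fin n → ℝ)          -- f_{tj}, j spatial
    (fiT : (Fin n → ℝ) → ℝ → Fin n → ℝ)         -- f_{it}, i spatial
    (fTT : (Fin n → ℝ) → ℝ → ℝ)                 -- f_{tt}
    (m : CotPJ n) : CotPJ n :=
  let x := m.1; let t := m.2.1; let ξ := m.2.2.1; let ξt := m.2.2.2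
  (fun i => (1 / t) * ∑ j, Λ x i j * ξ j - Ev x i * ξt,
   ∑ j, Ev x j * ξ j,
   fun j => (∑ i, f x t i j * ξ i) * ξ j + fT x t j * ξt * ξ j,
   (∑ i, fiT x t i * ξ i) * ξt + fTT x t * ξt * ξt)

theorem ODE_solution_eq_of_contDiffAt {E : Type*} [NormedAddCommGroup E] [NormedSpace ℝ E]
    {v : E → E} {c d : ℝ → E} (hv : ∀ r, ContDiffAt ℝ 1 v (c r))
    (hc : ∀ r, HasDerivAt c (v (c r)) r) (hd : ∀ r, HasDerivAt d (v (d r)) r)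
    {r₀ : ℝ} (h : c r₀ = d r₀) : c = d := by
  have hc_cont : Continuous c := continuous_iff_continuousAt.2 fun r => (hc r).continuousAt
  have hd_cont : Continuous d := continuous_iff_continuousAt.2 fun r => (hd r).continuousAt
  have hopen : IsOpen {r | c r = d r} := isOpen_iff_mem_nhds.2 fun r hr => by
    obtain ⟨K, u, hu, hlip⟩ := (hv r).exists_lipschitzOnWith
    have hu' : u ∈ nhds (d r) := hr ▸ hu
    exact ODE_solution_unique_of_eventually (v := fun _ => v) (s := fun _ => u)
      (.of_forall fun _ => hlip)
      ((hc_cont.continuousAt.eventually_mem hu).mono fun t ht => ⟨hc t, ht⟩)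
      ((hd_cont.continuousAt.eventually_mem hu').mono fun t ht => ⟨hd t, ht⟩) hr
  have huniv := IsClopen.eq_univ ⟨isClosed_eq hc_cont hd_cont, hopen⟩ ⟨r₀, h⟩
  exact funext fun r => Set.eq_univ_iff_forall.1 huniv r

noncomputable def phaseLiftCLM (n : ℕ) (z : ℝˣ) : CotPJ n →L[ℝ] CotPJ n :=
  (ContinuousLinearMap.id ℝ (Fin n → ℝ)).prodMap
    (((z : ℝ) • ContinuousLinearMap.id ℝ ℝ).prodMap
      (((z : ℝ) • ContinuousLinearMap.id ℝ (Fin n → ℝ)).prodMap (ContinuousLinearMap.id ℝ ℝ)))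

theorem coe_phaseLiftCLM (n : ℕ) (z : ℝˣ) : ⇑(phaseLiftCLM n z) = phaseLift n z :=
  rfl

theorem HasDerivAt.phaseLift {n : ℕ} {c : ℝ → CotPJ n} {c' : CotPJ n} {r : ℝ}
    (h : HasDerivAt c c' r) (z : ℝˣ) :
    HasDerivAt (fun r => phaseLift n z (c r)) (phaseLift n z c') r := by
  have h' := (phaseLiftCLM n z).hasFDerivAt.comp_hasDerivAt r h
  rwa [coe_phaseLiftCLM] at h'

theorem spray_phaseLift {n : ℕ}
    {Λ : (Fin n → ℝ) → Fin n → Fin n → ℝ} {Ev : (Fin n → ℝ) → Fin n → ℝ}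
    {f : (Fin n → ℝ) → ℝ → Fin n → Fin n → ℝ} {fT : (Fin n → ℝ) → ℝ → Fin n → ℝ}
    {fiT : (Fin n → ℝ) → ℝ → Fin n → ℝ} {fTT : (Fin n → ℝ) → ℝ → ℝ} {z : ℝˣ}
    {x : Fin n → ℝ} {t : ℝ} (ξ : Fin n → ℝ) (ξt : ℝ) (ht : t ≠ 0)
    (hfhom : ∀ i j, f x ((z : ℝ) * t) i j = (z : ℝ)⁻¹ * f x t i j)
    (hfiThom : ∀ i, fiT x ((z : ℝ) * t) i = (z : ℝ)⁻¹ * fiT x t i)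
    (hfThom : ∀ j, fT x ((z : ℝ) * t) j = fT x t j)
    (hfTThom : fTT x ((z : ℝ) * t) = fTT x t) :
    spray Λ Ev f fT fiT fTT (phaseLift n z (x, t, ξ, ξt))
      = phaseLift n z (spray Λ Ev f fT fiT fTT (x, t, ξ, ξt)) := by
  have hz : (z : ℝ) ≠ 0 := z.ne_zero
  have hscale : ∀ g : Fin n → ℝ, ∑ j, g j * ((z : ℝ) * ξ j) = (z : ℝ) * ∑ j, g j * ξ j :=
    fun g => by simp only [Finset.mul_sum, mul_left_comm]
  have hcancel : ∀ g : Fin n → ℝ, ∑ i, (z : ℝ)⁻¹ * g i * ((z : ℝ) * ξ i) = ∑ i, g i * ξ i :=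
    fun g => Finset.sum_congr rfl fun i _ => by field_simp
  simp only [spray, phaseLift, Prod.mk.injEq, funext_iff, Pi.smul_apply, smul_eq_mul, hfhom,
    hfiThom, hfThom, hfTThom]
  simp only [hcancel, hscale]
  refine ⟨fun i => ?_, trivial, fun j => ?_, trivial⟩
  · field_simp
  · ring

theorem contDiffAt_spray {n : ℕ} {k : WithTop ℕ∞}
    {Λ : (Fin n → ℝ) → Fin n → Fin n → ℝ} {Ev : (Fin n → ℝ) → Fin n → ℝ}
    {f : (Fin n → ℝ) → ℝ → Fin n → Fin n → ℝ} {fT : (Fin n → ℝ) → ℝ → Fin n → ℝ}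
    {fiT : (Fin n → ℝ) → ℝ → Fin n → ℝ} {fTT : (Fin n → ℝ) → ℝ → ℝ}
    (hΛ : ∀ i j, ContDiff ℝ k (fun x => Λ x i j))
    (hE : ∀ i, ContDiff ℝ k (fun x => Ev x i))
    (hf : ∀ i j, ContDiffOn ℝ k (fun q : (Fin n → ℝ) × ℝ => f q.1 q.2 i j) {q | q.2 ≠ 0})
    (hfT : ∀ j, ContDiffOn ℝ k (fun q : (Fin n → ℝ) × ℝ => fT q.1 q.2 j) {q | q.2 ≠ 0})
    (hfiT : ∀ i, ContDiffOn ℝ k (fun q : (Fin n → ℝ) × ℝ => fiT q.1 q.2 i) {q | q.2 ≠ 0})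
    (hfTT : ContDiffOn ℝ k (fun q : (Fin n → ℝ) × ℝ => fTT q.1 q.2) {q | q.2 ≠ 0})
    {p : CotPJ n} (hp : p.2.1 ≠ 0) :
    ContDiffAt ℝ k (spray Λ Ev f fT fiT fTT) p := by
  have hopen : IsOpen {q : (Fin n → ℝ) × ℝ | q.2 ≠ 0} :=
    isOpen_ne_fun continuous_snd continuous_const
  have coeff : ∀ g : (Fin n → ℝ) × ℝ → ℝ, ContDiffOn ℝ k g {q | q.2 ≠ 0} →
      ContDiffAt ℝ k (fun q : CotPJ n => g (q.1, q.2.1)) p := fun g hg =>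
    (hg.contDiffAt (hopen.mem_nhds hp)).comp p (by fun_prop)
  refine ContDiffAt.prodMk (contDiffAt_pi.2 fun i => by fun_prop (disch := exact hp))
    (ContDiffAt.prodMk (by fun_prop) (ContDiffAt.prodMk (contDiffAt_pi.2 fun j => ?_) ?_))
  · exact ((ContDiffAt.sum fun i _ => (coeff _ (hf i j)).mul (by fun_prop)).mul
      (by fun_prop)).add (((coeff _ (hfT j)).mul (by fun_prop)).mul (by fun_prop))
  · exact ((ContDiffAt.sum fun i _ => (coeff _ (hfiT i)).mul (by fun_prop)).mul
      (by fun_prop)).add (((coeff _ hfTT).mul (by fun_prop)).mul (by fun_prop))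

theorem homogeneous_spray_and_flow_commute {n : ℕ}
    (Λ : (Fin n → ℝ) → Fin n → Fin n → ℝ) (Ev : (Fin n → ℝ) → Fin n → ℝ)
    (f : (Fin n → ℝ) → ℝ → Fin n → Fin n → ℝ) (fT : (Fin n → ℝ) → ℝ → Fin n → ℝ)
    (fiT : (Fin n → ℝ) → ℝ → Fin n → ℝ) (fTT : (Fin n → ℝ) → ℝ → ℝ)
    -- smoothness of the data (on the region t ≠ 0 for the coefficients)
    (hΛ : ∀ i j, ContDiff ℝ (⊤ : ℕ∞) (fun x => Λ x i j))
    (hE : ∀ i, ContDiff ℝ (⊤ : ℕ∞) (fun x => Ev x i))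
    (hf : ∀ i j, ContDiffOn ℝ (⊤ : ℕ∞) (fun q : (Fin n → ℝ) × ℝ => f q.1 q.2 i j)
      {q | q.2 ≠ 0})
    (hfT : ∀ j, ContDiffOn ℝ (⊤ : ℕ∞) (fun q : (Fin n → ℝ) × ℝ => fT q.1 q.2 j)
      {q | q.2 ≠ 0})
    (hfiT : ∀ i, ContDiffOn ℝ (⊤ : ℕ∞) (fun q : (Fin n → ℝ) × ℝ => fiT q.1 q.2 i)
      {q | q.2 ≠ 0})
    (hfTT : ContDiffOn ℝ (⊤ : ℕ∞) (fun q : (Fin n → ℝ) × ℝ => fTT q.1 q.2) {q | q.2 ≠ 0})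
    -- homogeneity of the free coefficients:
    -- f_{ij}(x, z·t) = (1/z)·f_{ij}(x,t) for i ≠ t, and f_{tj}(x, z·t) = f_{tj}(x,t)
    (hfhom : ∀ (z : ℝˣ) (x : Fin n → ℝ) (t : ℝ), t ≠ 0 → ∀ i j,
      f x ((z : ℝ) * t) i j = (z : ℝ)⁻¹ * f x t i j)
    (hfiThom : ∀ (z : ℝˣ) (x : Fin n → ℝ) (t : ℝ), t ≠ 0 → ∀ i,
      fiT x ((z : ℝ) * t) i = (z : ℝ)⁻¹ * fiT x t i)
    (hfThom : ∀ (z : ℝˣ) (x : Fin n → ℝ) (t : ℝ), t ≠ 0 → ∀ j,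
      fT x ((z : ℝ) * t) j = fT x t j)
    (hfTThom : ∀ (z : ℝˣ) (x : Fin n → ℝ) (t : ℝ), t ≠ 0 →
      fTT x ((z : ℝ) * t) = fTT x t) :
    -- (1) the spray is 0-homogeneous: (T^*h_z)_* X = X
    (∀ (z : ℝˣ) (m : CotPJ n), m.2.1 ≠ 0 →
      spray Λ Ev f fT fiT fTT (phaseLift n z m)
        = phaseLift n z (spray Λ Ev f fT fiT fTT m)) ∧
    -- (2) consequently any flow of the spray commutes with the lifted action
    (∀ φ : ℝ → CotPJ n → CotPJ n,
      (∀ m : CotPJ n, m.2.1 ≠ 0 → φ 0 m = m) →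
      (∀ (s : ℝ) (m : CotPJ n), m.2.1 ≠ 0 → (φ s m).2.1 ≠ 0) →
      (∀ (s : ℝ) (m : CotPJ n), m.2.1 ≠ 0 →
        HasDerivAt (fun r => φ r m) (spray Λ Ev f fT fiT fTT (φ s m)) s) →
      ∀ (s : ℝ) (z : ℝˣ) (m : CotPJ n), m.2.1 ≠ 0 →
        φ s (phaseLift n z m) = phaseLift n z (φ s m)) := by
  have hom : ∀ (z : ℝˣ) (m : CotPJ n), m.2.1 ≠ 0 →
      spray Λ Ev f fT fiT fTT (phaseLift n z m) = phaseLift n z (spray Λ Ev f fT fiT fTT m) :=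
    fun z ⟨x, t, ξ, ξt⟩ ht => spray_phaseLift ξ ξt ht (hfhom z x t ht) (hfiThom z x t ht)
      (hfThom z x t ht) (hfTThom z x t ht)
  refine ⟨hom, fun φ h0 hne hder s z m hm => ?_⟩
  have hzm : (phaseLift n z m).2.1 ≠ 0 := mul_ne_zero z.ne_zero hm
  have hsmooth : ∀ p : CotPJ n, p.2.1 ≠ 0 → ContDiffAt ℝ 1 (spray Λ Ev f fT fiT fTT) p :=
    fun p hp => (contDiffAt_spray hΛ hE hf hfT hfiT hfTT hp).of_le (by exact_mod_cast le_top)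
  have hlift : ∀ r, HasDerivAt (fun r => phaseLift n z (φ r m))
      (spray Λ Ev f fT fiT fTT (phaseLift n z (φ r m))) r := fun r => by
    rw [hom z _ (hne r m hm)]
    exact (hder r m hm).phaseLift z
  have hcurves := ODE_solution_eq_of_contDiffAt (fun r => hsmooth _ (hne r _ hzm))
    (fun r => hder r _ hzm) hlift (r₀ := 0) (by simp only [h0 _ hzm, h0 m hm])
  exact congrFun hcurves s
end
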